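/- Let (x₀,y₀) ∈ ℝ² be a point where σ(x₀,y₀) ≠ 0, and let û : ℝ² → ℝ be twice continuously differentiable on a neighborhood of θ(x₀,y₀). Set u = û ∘ θ. Then at the point (x₀,y₀) one has the identity f₁·∂²u/∂x² + f₂·∂²u/∂x∂y + f₃·∂²u/∂y² + f₄·∂u/∂x + f₅·∂u/∂y = −(∂²û/∂x̂² + ∂²û/∂ŷ²)(θ(x₀,y₀)), i.e., the second-order operator L with coefficients f₁,…,f₅ applied to u reproduces minus the Laplacian of û evaluated at the image point. -/

import Mathlib

/-- Partial derivative with respect to the first variable. -/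
noncomputable def pdx (f : ℝ × ℝ → ℝ) (p : ℝ × ℝ) : ℝ :=
  deriv (fun s => f (s, p.2)) p.1

/-- Partial derivative with respect to the second variable. -/
noncomputable def pdy (f : ℝ × ℝ → ℝ) (p : ℝ × ℝ) : ℝ :=
  deriv (fun s => f (p.1, s)) p.2

/-- First component of the bilinear map θ. -/
noncomputable def theta1 (α γ : ℝ) (p : ℝ × ℝ) : ℝ :=
  p.1 + α * p.2 + (γ - 1 - α) * p.1 * p.2

/-- Second component of the bilinear map θ. -/
noncomputable def theta2 (β δ : ℝ) (p : ℝ × ℝ) : ℝ :=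
  β * p.2 + (δ - β) * p.1 * p.2

/-- The bilinear map θ. -/
noncomputable def theta (α β γ δ : ℝ) (p : ℝ × ℝ) : ℝ × ℝ :=
  (theta1 α γ p, theta2 β δ p)

/-- Jacobian determinant of θ. -/
noncomputable def sigma (α β γ δ : ℝ) (p : ℝ × ℝ) : ℝ :=
  pdx (theta1 α γ) p * pdy (theta2 β δ) p - pdy (theta1 α γ) p * pdx (theta2 β δ) p

/-- Coefficient f₁ of the transformed operator L. -/
noncomputable def f1 (α β γ δ : ℝ) (p : ℝ × ℝ) : ℝ :=
  -(((pdy (theta1 α γ) p) ^ 2 + (pdy (theta2 β δ) p) ^ 2) / (sigma α β γ δ p) ^ 2)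

/-- Coefficient f₂ of the transformed operator L. -/
noncomputable def f2 (α β γ δ : ℝ) (p : ℝ × ℝ) : ℝ :=
  2 * ((pdx (theta1 α γ) p * pdy (theta1 α γ) p +
    pdx (theta2 β δ) p * pdy (theta2 β δ) p) / (sigma α β γ δ p) ^ 2)

/-- Coefficient f₃ of the transformed operator L. -/
noncomputable def f3 (α β γ δ : ℝ) (p : ℝ × ℝ) : ℝ :=
  -(((pdx (theta1 α γ) p) ^ 2 + (pdx (theta2 β δ) p) ^ 2) / (sigma α β γ δ p) ^ 2)

/-- Coefficient f₄ of the transformed operator L; here ∂²θ₂/∂x∂y = δ−β and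
∂²θ₁/∂x∂y = γ−1−α are constants. -/
noncomputable def f4 (α β γ δ : ℝ) (p : ℝ × ℝ) : ℝ :=
  (f2 α β γ δ p / sigma α β γ δ p) *
    (pdy (theta1 α γ) p * (δ - β) - pdy (theta2 β δ) p * (γ - 1 - α))

/-- Coefficient f₅ of the transformed operator L. -/
noncomputable def f5 (α β γ δ : ℝ) (p : ℝ × ℝ) : ℝ :=
  (f2 α β γ δ p / sigma α β γ δ p) *
    (pdx (theta2 β δ) p * (γ - 1 - α) - pdx (theta1 α γ) p * (δ - β))

/-!
Write `a = ∂ₓθ`, `b = ∂ᵧθ` and `J = [a b]`, so `σ = det J`. By the chain rule the second partials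
of `u = û ∘ θ` are `D²û(a, a)`, `D²û(a, b) + Dû(∂ₓ∂ᵧθ)` and `D²û(b, b)` (θ is affine in each
variable separately). The second-order part of `L u` is `-tr((JᵀJ)⁻¹ Jᵀ D²û J) = -tr D²û`, and
the first-order part vanishes because `f₄`, `f₅` are chosen so that, by Cramer's rule, the
contributions `f₄ Dû(a) + f₅ Dû(b)` cancel `f₂ Dû(∂ₓ∂ᵧθ)`.
-/

open Topology Filter

section Partials

variable {E : Type*} [NormedAddCommGroup E] [NormedSpace ℝ E]

theorem pdx_congr {f g : ℝ × ℝ → ℝ} {p : ℝ × ℝ} (h : f =ᶠ[𝓝 p] g) : pdx f p = pdx g p :=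
  Filter.EventuallyEq.deriv_eq <|
    ((continuous_id.prodMk continuous_const).tendsto' p.1 p rfl).eventually h

theorem pdy_congr {f g : ℝ × ℝ → ℝ} {p : ℝ × ℝ} (h : f =ᶠ[𝓝 p] g) : pdy f p = pdy g p :=
  Filter.EventuallyEq.deriv_eq <|
    ((continuous_const.prodMk continuous_id).tendsto' p.2 p rfl).eventually h

theorem pdx_comp {f : E → ℝ} {φ : ℝ × ℝ → E} {p : ℝ × ℝ} {v : E}
    (hf : DifferentiableAt ℝ f (φ p)) (hφ : HasDerivAt (fun s => φ (s, p.2)) v p.1) :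
    pdx (fun q => f (φ q)) p = fderiv ℝ f (φ p) v :=
  (hf.hasFDerivAt.comp_hasDerivAt p.1 hφ).deriv

theorem pdy_comp {f : E → ℝ} {φ : ℝ × ℝ → E} {p : ℝ × ℝ} {v : E}
    (hf : DifferentiableAt ℝ f (φ p)) (hφ : HasDerivAt (fun t => φ (p.1, t)) v p.2) :
    pdy (fun q => f (φ q)) p = fderiv ℝ f (φ p) v :=
  (hf.hasFDerivAt.comp_hasDerivAt p.2 hφ).deriv

theorem pdx_fderiv_apply {f : E → ℝ} {B : E →L[ℝ] E →L[ℝ] ℝ} {φ w : ℝ × ℝ → E} {p : ℝ × ℝ}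
    {v w' : E} (hB : HasFDerivAt (fderiv ℝ f) B (φ p))
    (hφ : HasDerivAt (fun s => φ (s, p.2)) v p.1) (hw : HasDerivAt (fun s => w (s, p.2)) w' p.1) :
    pdx (fun q => fderiv ℝ f (φ q) (w q)) p = B v (w p) + fderiv ℝ f (φ p) w' := by
  have hBφ : HasDerivAt (fun s => fderiv ℝ f (φ (s, p.2))) (B v) p.1 := hB.comp_hasDerivAt p.1 hφ
  exact (hBφ.clm_apply hw).deriv

theorem pdy_fderiv_apply {f : E → ℝ} {B : E →L[ℝ] E →L[ℝ] ℝ} {φ w : ℝ × ℝ → E} {p : ℝ × ℝ}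
    {v w' : E} (hB : HasFDerivAt (fderiv ℝ f) B (φ p))
    (hφ : HasDerivAt (fun t => φ (p.1, t)) v p.2) (hw : HasDerivAt (fun t => w (p.1, t)) w' p.2) :
    pdy (fun q => fderiv ℝ f (φ q) (w q)) p = B v (w p) + fderiv ℝ f (φ p) w' := by
  have hBφ : HasDerivAt (fun t => fderiv ℝ f (φ (p.1, t))) (B v) p.2 := hB.comp_hasDerivAt p.2 hφ
  exact (hBφ.clm_apply hw).deriv

theorem pdx_eq_fderiv {f : ℝ × ℝ → ℝ} {p : ℝ × ℝ} (hf : DifferentiableAt ℝ f p) :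
    pdx f p = fderiv ℝ f p (1, 0) :=
  (hf.hasFDerivAt.comp_hasDerivAt p.1
    ((hasDerivAt_id p.1).prodMk (hasDerivAt_const p.1 p.2))).deriv

theorem pdy_eq_fderiv {f : ℝ × ℝ → ℝ} {p : ℝ × ℝ} (hf : DifferentiableAt ℝ f p) :
    pdy f p = fderiv ℝ f p (0, 1) :=
  (hf.hasFDerivAt.comp_hasDerivAt p.2
    ((hasDerivAt_const p.2 p.1).prodMk (hasDerivAt_id p.2))).deriv

theorem pdx_pdx_eq {f : ℝ × ℝ → ℝ} {B : ℝ × ℝ →L[ℝ] ℝ × ℝ →L[ℝ] ℝ} {p : ℝ × ℝ}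
    (hf : ∀ᶠ q in 𝓝 p, DifferentiableAt ℝ f q) (hB : HasFDerivAt (fderiv ℝ f) B p) :
    pdx (pdx f) p = B (1, 0) (1, 0) := by
  rw [pdx_congr (hf.mono fun q => pdx_eq_fderiv)]
  simpa using pdx_fderiv_apply (φ := fun q => q) (w := fun _ => ((1 : ℝ), (0 : ℝ))) hB
    ((hasDerivAt_id p.1).prodMk (hasDerivAt_const p.1 p.2)) (hasDerivAt_const p.1 _)

theorem pdy_pdy_eq {f : ℝ × ℝ → ℝ} {B : ℝ × ℝ →L[ℝ] ℝ × ℝ →L[ℝ] ℝ} {p : ℝ × ℝ}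
    (hf : ∀ᶠ q in 𝓝 p, DifferentiableAt ℝ f q) (hB : HasFDerivAt (fderiv ℝ f) B p) :
    pdy (pdy f) p = B (0, 1) (0, 1) := by
  rw [pdy_congr (hf.mono fun q => pdy_eq_fderiv)]
  simpa using pdy_fderiv_apply (φ := fun q => q) (w := fun _ => ((0 : ℝ), (1 : ℝ))) hB
    ((hasDerivAt_const p.2 p.1).prodMk (hasDerivAt_id p.2)) (hasDerivAt_const p.2 _)

end Partials

section Algebra

theorem ContinuousLinearMap.apply_prod_eq {F : Type*} [AddCommGroup F] [Module ℝ F]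
    [TopologicalSpace F] (L : ℝ × ℝ →L[ℝ] F) (a : ℝ × ℝ) :
    L a = a.1 • L (1, 0) + a.2 • L (0, 1) := by
  conv_lhs => rw [show a = a.1 • ((1 : ℝ), (0 : ℝ)) + a.2 • ((0 : ℝ), (1 : ℝ)) by ext <;> simp]
  rw [map_add, map_smul, map_smul]

theorem ContinuousLinearMap.apply_apply_prod_eq (B : ℝ × ℝ →L[ℝ] ℝ × ℝ →L[ℝ] ℝ) (a b : ℝ × ℝ) :
    B a b = a.1 * b.1 * B (1, 0) (1, 0) + a.1 * b.2 * B (1, 0) (0, 1)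
      + a.2 * b.1 * B (0, 1) (1, 0) + a.2 * b.2 * B (0, 1) (0, 1) := by
  rw [B.apply_prod_eq a, add_apply, smul_apply, smul_apply, (B (1, 0)).apply_prod_eq b,
    (B (0, 1)).apply_prod_eq b]
  simp only [smul_eq_mul]
  ring

/-- `tr ((JᵀJ)⁻¹ (Jᵀ B J)) = tr B` for `J = [a b]`, with the inverse written through the
adjugate. -/
theorem bilin_trace_change_of_basis (B : ℝ × ℝ →L[ℝ] ℝ × ℝ →L[ℝ] ℝ)
    (hB : B (1, 0) (0, 1) = B (0, 1) (1, 0)) (a b : ℝ × ℝ) :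
    (b.1 ^ 2 + b.2 ^ 2) * B a a - 2 * (a.1 * b.1 + a.2 * b.2) * B a b + (a.1 ^ 2 + a.2 ^ 2) * B b b
      = (a.1 * b.2 - b.1 * a.2) ^ 2 * (B (1, 0) (1, 0) + B (0, 1) (0, 1)) := by
  rw [B.apply_apply_prod_eq a a, B.apply_apply_prod_eq a b, B.apply_apply_prod_eq b b, hB]
  ring

theorem det_smul_eq_cramer (a b m : ℝ × ℝ) :
    (a.1 * b.2 - b.1 * a.2) • m = (b.2 * m.1 - b.1 * m.2) • a + (a.1 * m.2 - a.2 * m.1) • b := by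
  ext <;> simp only [Prod.smul_fst, Prod.smul_snd, smul_eq_mul, Prod.fst_add, Prod.snd_add] <;> ring

theorem transformed_operator_eq_neg_trace (B : ℝ × ℝ →L[ℝ] ℝ × ℝ →L[ℝ] ℝ)
    (hB : B (1, 0) (0, 1) = B (0, 1) (1, 0)) (L : ℝ × ℝ →L[ℝ] ℝ) (a b m : ℝ × ℝ)
    (hσ : a.1 * b.2 - b.1 * a.2 ≠ 0) :
    -((b.1 ^ 2 + b.2 ^ 2) / (a.1 * b.2 - b.1 * a.2) ^ 2) * B a a
      + 2 * ((a.1 * b.1 + a.2 * b.2) / (a.1 * b.2 - b.1 * a.2) ^ 2) * (B a b + L m)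
      + -((a.1 ^ 2 + a.2 ^ 2) / (a.1 * b.2 - b.1 * a.2) ^ 2) * B b b
      + 2 * ((a.1 * b.1 + a.2 * b.2) / (a.1 * b.2 - b.1 * a.2) ^ 2) / (a.1 * b.2 - b.1 * a.2)
        * (b.1 * m.2 - b.2 * m.1) * L a
      + 2 * ((a.1 * b.1 + a.2 * b.2) / (a.1 * b.2 - b.1 * a.2) ^ 2) / (a.1 * b.2 - b.1 * a.2)
        * (a.2 * m.1 - a.1 * m.2) * L b
      = -(B (1, 0) (1, 0) + B (0, 1) (0, 1)) := by
  have htrace := bilin_trace_change_of_basis B hB a b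
  have hcramer := congrArg L (det_smul_eq_cramer a b m)
  simp only [map_add, map_smul, smul_eq_mul] at hcramer
  -- `field_simp` only clears the powers of `σ` when `σ` is an atom
  generalize hS : a.1 * b.2 - b.1 * a.2 = σ at hσ ⊢
  field_simp
  subst hS
  linear_combination (-(a.1 * b.2 - b.1 * a.2)) * htrace + 2 * (a.1 * b.1 + a.2 * b.2) * hcramer

end Algebra

section Theta

variable (α β γ δ : ℝ)

def thetaDx (p : ℝ × ℝ) : ℝ × ℝ := (1 + (γ - 1 - α) * p.2, (δ - β) * p.2)

def thetaDy (p : ℝ × ℝ) : ℝ × ℝ := (α + (γ - 1 - α) * p.1, β + (δ - β) * p.1)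

theorem continuous_theta : Continuous (theta α β γ δ) := by
  unfold theta theta1 theta2
  fun_prop

theorem hasDerivAt_theta_fst (p : ℝ × ℝ) :
    HasDerivAt (fun s => theta α β γ δ (s, p.2)) (thetaDx α β γ δ p) p.1 := by
  have h : (fun s => theta α β γ δ (s, p.2))
      = fun s => s • thetaDx α β γ δ p + (α * p.2, β * p.2) := by
    funext s
    simp only [theta, theta1, theta2, thetaDx, Prod.smul_mk, smul_eq_mul, Prod.mk_add_mk]
    congr 1 <;> ring
  simpa [h] using
    ((hasDerivAt_id p.1).smul_const (thetaDx α β γ δ p)).add_const (α * p.2, β * p.2)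

theorem hasDerivAt_theta_snd (p : ℝ × ℝ) :
    HasDerivAt (fun t => theta α β γ δ (p.1, t)) (thetaDy α β γ δ p) p.2 := by
  have h : (fun t => theta α β γ δ (p.1, t)) = fun t => t • thetaDy α β γ δ p + (p.1, 0) := by
    funext t
    simp only [theta, theta1, theta2, thetaDy, Prod.smul_mk, smul_eq_mul, Prod.mk_add_mk, add_zero]
    congr 1 <;> ring
  simpa [h] using
    ((hasDerivAt_id p.2).smul_const (thetaDy α β γ δ p)).add_const (p.1, (0 : ℝ))

theorem hasDerivAt_thetaDx_fst (p : ℝ × ℝ) :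
    HasDerivAt (fun s => thetaDx α β γ δ (s, p.2)) 0 p.1 :=
  hasDerivAt_const p.1 (thetaDx α β γ δ p)

theorem hasDerivAt_thetaDy_fst (p : ℝ × ℝ) :
    HasDerivAt (fun s => thetaDy α β γ δ (s, p.2)) (γ - 1 - α, δ - β) p.1 := by
  have h : (fun s => thetaDy α β γ δ (s, p.2)) = fun s => s • (γ - 1 - α, δ - β) + (α, β) := by
    funext s
    simp only [thetaDy, Prod.smul_mk, smul_eq_mul, Prod.mk_add_mk]
    congr 1 <;> ring
  simpa [h] using
    ((hasDerivAt_id p.1).smul_const ((γ - 1 - α, δ - β) : ℝ × ℝ)).add_const (α, β)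

theorem hasDerivAt_thetaDy_snd (p : ℝ × ℝ) :
    HasDerivAt (fun t => thetaDy α β γ δ (p.1, t)) 0 p.2 :=
  hasDerivAt_const p.2 (thetaDy α β γ δ p)

theorem pdx_theta1 (p : ℝ × ℝ) : pdx (theta1 α γ) p = (thetaDx α β γ δ p).1 :=
  (pdx_comp (f := Prod.fst) differentiableAt_fst (hasDerivAt_theta_fst α β γ δ p)).trans
    (by simp [fderiv_fst])

theorem pdx_theta2 (p : ℝ × ℝ) : pdx (theta2 β δ) p = (thetaDx α β γ δ p).2 :=
  (pdx_comp (f := Prod.snd) differentiableAt_snd (hasDerivAt_theta_fst α β γ δ p)).trans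
    (by simp [fderiv_snd])

theorem pdy_theta1 (p : ℝ × ℝ) : pdy (theta1 α γ) p = (thetaDy α β γ δ p).1 :=
  (pdy_comp (f := Prod.fst) differentiableAt_fst (hasDerivAt_theta_snd α β γ δ p)).trans
    (by simp [fderiv_fst])

theorem pdy_theta2 (p : ℝ × ℝ) : pdy (theta2 β δ) p = (thetaDy α β γ δ p).2 :=
  (pdy_comp (f := Prod.snd) differentiableAt_snd (hasDerivAt_theta_snd α β γ δ p)).trans
    (by simp [fderiv_snd])

end Theta

section Composition

variable {α β γ δ : ℝ} {uhat : ℝ × ℝ → ℝ} {B : ℝ × ℝ →L[ℝ] ℝ × ℝ →L[ℝ] ℝ} {p₀ : ℝ × ℝ}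

theorem pdx_comp_theta_eventuallyEq
    (hdiff : ∀ᶠ p in 𝓝 p₀, DifferentiableAt ℝ uhat (theta α β γ δ p)) :
    pdx (fun p => uhat (theta α β γ δ p))
      =ᶠ[𝓝 p₀] fun p => fderiv ℝ uhat (theta α β γ δ p) (thetaDx α β γ δ p) :=
  hdiff.mono fun p hp => pdx_comp hp (hasDerivAt_theta_fst α β γ δ p)

theorem pdy_comp_theta_eventuallyEq
    (hdiff : ∀ᶠ p in 𝓝 p₀, DifferentiableAt ℝ uhat (theta α β γ δ p)) :
    pdy (fun p => uhat (theta α β γ δ p))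
      =ᶠ[𝓝 p₀] fun p => fderiv ℝ uhat (theta α β γ δ p) (thetaDy α β γ δ p) :=
  hdiff.mono fun p hp => pdy_comp hp (hasDerivAt_theta_snd α β γ δ p)

theorem pdx_pdx_comp_theta (hdiff : ∀ᶠ p in 𝓝 p₀, DifferentiableAt ℝ uhat (theta α β γ δ p))
    (hB : HasFDerivAt (fderiv ℝ uhat) B (theta α β γ δ p₀)) :
    pdx (pdx fun p => uhat (theta α β γ δ p)) p₀
      = B (thetaDx α β γ δ p₀) (thetaDx α β γ δ p₀) := by
  rw [pdx_congr (pdx_comp_theta_eventuallyEq hdiff),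
    pdx_fderiv_apply hB (hasDerivAt_theta_fst α β γ δ p₀) (hasDerivAt_thetaDx_fst α β γ δ p₀),
    map_zero, add_zero]

theorem pdx_pdy_comp_theta (hdiff : ∀ᶠ p in 𝓝 p₀, DifferentiableAt ℝ uhat (theta α β γ δ p))
    (hB : HasFDerivAt (fderiv ℝ uhat) B (theta α β γ δ p₀)) :
    pdx (pdy fun p => uhat (theta α β γ δ p)) p₀
      = B (thetaDx α β γ δ p₀) (thetaDy α β γ δ p₀)
        + fderiv ℝ uhat (theta α β γ δ p₀) (γ - 1 - α, δ - β) := by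
  rw [pdx_congr (pdy_comp_theta_eventuallyEq hdiff),
    pdx_fderiv_apply hB (hasDerivAt_theta_fst α β γ δ p₀) (hasDerivAt_thetaDy_fst α β γ δ p₀)]

theorem pdy_pdy_comp_theta (hdiff : ∀ᶠ p in 𝓝 p₀, DifferentiableAt ℝ uhat (theta α β γ δ p))
    (hB : HasFDerivAt (fderiv ℝ uhat) B (theta α β γ δ p₀)) :
    pdy (pdy fun p => uhat (theta α β γ δ p)) p₀
      = B (thetaDy α β γ δ p₀) (thetaDy α β γ δ p₀) := by
  rw [pdy_congr (pdy_comp_theta_eventuallyEq hdiff),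
    pdy_fderiv_apply hB (hasDerivAt_theta_snd α β γ δ p₀) (hasDerivAt_thetaDy_snd α β γ δ p₀),
    map_zero, add_zero]

end Composition

theorem stmt_4 (α β γ δ : ℝ) (p₀ : ℝ × ℝ)
    (hσ : sigma α β γ δ p₀ ≠ 0)
    (uhat : ℝ × ℝ → ℝ) (huhat : ContDiffAt ℝ 2 uhat (theta α β γ δ p₀)) :
    f1 α β γ δ p₀ * pdx (pdx (fun p => uhat (theta α β γ δ p))) p₀ +
    f2 α β γ δ p₀ * pdx (pdy (fun p => uhat (theta α β γ δ p))) p₀ +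
    f3 α β γ δ p₀ * pdy (pdy (fun p => uhat (theta α β γ δ p))) p₀ +
    f4 α β γ δ p₀ * pdx (fun p => uhat (theta α β γ δ p)) p₀ +
    f5 α β γ δ p₀ * pdy (fun p => uhat (theta α β γ δ p)) p₀ =
      -(pdx (pdx uhat) (theta α β γ δ p₀) + pdy (pdy uhat) (theta α β γ δ p₀)) := by
  have hdiff : ∀ᶠ q in 𝓝 (theta α β γ δ p₀), DifferentiableAt ℝ uhat q :=
    (huhat.eventually (by simp)).mono fun q hq => hq.differentiableAt two_ne_zero
  have hdiffθ : ∀ᶠ p in 𝓝 p₀, DifferentiableAt ℝ uhat (theta α β γ δ p) :=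
    ((continuous_theta α β γ δ).tendsto p₀).eventually hdiff
  have hB : HasFDerivAt (fderiv ℝ uhat) (fderiv ℝ (fderiv ℝ uhat) (theta α β γ δ p₀))
      (theta α β γ δ p₀) :=
    ((huhat.fderiv_right (m := 1) le_rfl).differentiableAt one_ne_zero).hasFDerivAt
  rw [pdx_pdx_comp_theta hdiffθ hB, pdx_pdy_comp_theta hdiffθ hB, pdy_pdy_comp_theta hdiffθ hB,
    pdx_comp hdiff.self_of_nhds (hasDerivAt_theta_fst α β γ δ p₀),
    pdy_comp hdiff.self_of_nhds (hasDerivAt_theta_snd α β γ δ p₀),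
    pdx_pdx_eq hdiff hB, pdy_pdy_eq hdiff hB]
  simp only [f1, f2, f3, f4, f5, sigma, pdx_theta1 α β γ δ, pdx_theta2 α β γ δ,
    pdy_theta1 α β γ δ, pdy_theta2 α β γ δ] at hσ ⊢
  exact transformed_operator_eq_neg_trace _ (huhat.isSymmSndFDerivAt (by simp) _ _) _ _ _ _ hσ
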